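/- arXiv:1906.10211 — 4 statements merged into one kernel-verified Lean document; each statement's English description precedes it below -/
import Mathlib

section
/- Suppose D₀ ∈ ℝ^{m×m} is invertible, X₀ ∈ ℝ^{m×n}, Y = D₀ X₀, and the dictionary update problem (find D, X with Y = D X and X vanishing off the support Ω of X₀) has a unique solution up to scaling (i.e., every solution has the form (D₀ S, S⁻¹ X₀) for some invertible diagonal S). Then n ≥ m + |Ω|/m − 1, where |Ω| is the total number of nonzero entries of X₀. -/
open Matrix

/-- Any real square matrix becomes invertible after adding a suitable scalar matrix. -/
lemma stmt4_aux_exists_unit {m : ℕ} (B : Matrix (Fin m) (Fin m) ℝ) :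
    ∃ t : ℝ, IsUnit (B + t • 1) := by
  have h := Matrix.finite_spectrum (R := ℝ) (-B)
  obtain ⟨t, ht⟩ := h.infinite_compl.nonempty
  refine ⟨t, ?_⟩
  have := spectrum.notMem_iff.mp ht
  rwa [Algebra.algebraMap_eq_smul_one, sub_neg_eq_add, add_comm] at this

/-- if the dictionary update problem has a unique solution up to diagonal
scaling, then `n ≥ m + |Ω|/m − 1`, where `|Ω|` is the number of nonzero entries of `X₀`. -/
theorem stmt4 (m n : ℕ)
    (D₀ : Matrix (Fin m) (Fin m) ℝ) (hD : IsUnit D₀)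
    (X₀ Y : Matrix (Fin m) (Fin n) ℝ) (hY : Y = D₀ * X₀)
    (huniq : ∀ (D : Matrix (Fin m) (Fin m) ℝ) (X : Matrix (Fin m) (Fin n) ℝ),
      Y = D * X → (∀ (i : Fin m) (j : Fin n), X₀ i j = 0 → X i j = 0) →
      ∃ d : Fin m → ℝ, (∀ i, d i ≠ 0) ∧
        D = D₀ * Matrix.diagonal d ∧ X = (Matrix.diagonal d)⁻¹ * X₀) :
    (n : ℝ) ≥ m +
      ((Finset.univ.filter fun p : Fin m × Fin n => X₀ p.1 p.2 ≠ 0).card : ℝ) / m - 1 := by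
  classical
  rcases Nat.eq_zero_or_pos m with hm0 | hmpos
  · subst hm0
    simp only [Finset.univ_eq_empty, Finset.filter_empty, Finset.card_empty, Nat.cast_zero,
      zero_div, add_zero, ge_iff_le]
    have : (0:ℝ) ≤ n := Nat.cast_nonneg n
    norm_num
    linarith
  set Ω : Finset (Fin m × Fin n) :=
    Finset.univ.filter fun p : Fin m × Fin n => X₀ p.1 p.2 ≠ 0 with hΩ
  set Ωc : Finset (Fin m × Fin n) :=
    Finset.univ.filter fun p : Fin m × Fin n => X₀ p.1 p.2 = 0 with hΩc
  -- the linear map sending B to the entries of B * X₀ outside the support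
  let φ : Matrix (Fin m) (Fin m) ℝ →ₗ[ℝ] ({p // p ∈ Ωc} → ℝ) :=
    { toFun := fun B p => (B * X₀) p.1.1 p.1.2
      map_add' := by intro A B; funext p; simp [Matrix.add_mul]
      map_smul' := by intro c B; funext p; simp [Matrix.smul_mul] }
  -- the diagonal embedding
  let δ : (Fin m → ℝ) →ₗ[ℝ] Matrix (Fin m) (Fin m) ℝ :=
    { toFun := Matrix.diagonal
      map_add' := by intro a b; exact (Matrix.diagonal_add a b).symm
      map_smul' := by intro c a; simp }
  -- every matrix in the kernel of φ is diagonal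
  have hker : LinearMap.ker φ ≤ LinearMap.range δ := by
    intro B hB
    have hBsupp : ∀ (i : Fin m) (j : Fin n), X₀ i j = 0 → (B * X₀) i j = 0 := by
      intro i j hij
      have hmem : (i, j) ∈ Ωc := by simp [hΩc, hij]
      have := congrFun (LinearMap.mem_ker.mp hB) ⟨(i, j), hmem⟩
      exact this
    obtain ⟨t, hC⟩ := stmt4_aux_exists_unit B
    set C : Matrix (Fin m) (Fin m) ℝ := B + t • 1 with hCdef
    have hCdet : IsUnit C.det := (Matrix.isUnit_iff_isUnit_det C).mp hC
    have hCsupp : ∀ (i : Fin m) (j : Fin n), X₀ i j = 0 → (C * X₀) i j = 0 := by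
      intro i j hij
      have : C * X₀ = B * X₀ + t • X₀ := by
        rw [hCdef, Matrix.add_mul, Matrix.smul_mul, Matrix.one_mul]
      rw [this]
      simp [hBsupp i j hij, hij]
    have hYeq : Y = (D₀ * C⁻¹) * (C * X₀) := by
      rw [hY]
      rw [Matrix.mul_assoc, ← Matrix.mul_assoc C⁻¹, Matrix.nonsing_inv_mul C hCdet,
        Matrix.one_mul]
    obtain ⟨d, hd, hDeq, _⟩ := huniq (D₀ * C⁻¹) (C * X₀) hYeq hCsupp
    have hCinv : C⁻¹ = Matrix.diagonal d := by
      have h1 : (↑hD.unit⁻¹ : Matrix (Fin m) (Fin m) ℝ) * D₀ = 1 := hD.val_inv_mul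
      have h2 := congrArg (fun M => (↑hD.unit⁻¹ : Matrix (Fin m) (Fin m) ℝ) * M) hDeq
      simpa only [← Matrix.mul_assoc, h1, Matrix.one_mul] using h2
    have hCeq : C = Matrix.diagonal (Ring.inverse d) := by
      have : C = (C⁻¹)⁻¹ := (Matrix.nonsing_inv_nonsing_inv C hCdet).symm
      rw [this, hCinv, Matrix.inv_diagonal]
    refine ⟨Ring.inverse d - fun _ => t, ?_⟩
    show Matrix.diagonal _ = B
    have hB' : B = C - t • 1 := by rw [hCdef]; abel
    rw [hB', hCeq, Matrix.smul_one_eq_diagonal]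
    exact (Matrix.diagonal_sub _ _).symm
  -- dimension count
  have h1 : Module.finrank ℝ (LinearMap.ker φ) ≤ m := by
    calc Module.finrank ℝ (LinearMap.ker φ) ≤ Module.finrank ℝ (LinearMap.range δ) :=
          Submodule.finrank_mono hker
      _ ≤ Module.finrank ℝ (Fin m → ℝ) := LinearMap.finrank_range_le δ
      _ = m := by simp
  have h2 : Module.finrank ℝ (LinearMap.range φ) ≤ Ωc.card := by
    calc Module.finrank ℝ (LinearMap.range φ)
        ≤ Module.finrank ℝ ({p // p ∈ Ωc} → ℝ) := Submodule.finrank_le _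
      _ = Ωc.card := by simp [Module.finrank_pi]
  have h3 := LinearMap.finrank_range_add_finrank_ker φ
  have hmat : Module.finrank ℝ (Matrix (Fin m) (Fin m) ℝ) = m * m := by
    simp [Module.finrank_matrix]
  rw [hmat] at h3
  have hdim : m * m ≤ Ωc.card + m := by omega
  have hcards : Ω.card + Ωc.card = m * n := by
    have h4 := Finset.card_filter_add_card_filter_not
      (s := (Finset.univ : Finset (Fin m × Fin n)))
      (p := fun p : Fin m × Fin n => X₀ p.1 p.2 ≠ 0)
    simp only [not_not, Finset.card_univ, Fintype.card_prod, Fintype.card_fin] at h4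
    exact h4
  have hnat : Ω.card + m * m ≤ m * n + m := by omega
  have hm' : (0:ℝ) < m := by exact_mod_cast hmpos
  have hreal : (Ω.card : ℝ) + m * m ≤ m * n + m := by exact_mod_cast hnat
  have hdiv : (Ω.card : ℝ) / m ≤ n + 1 - m := by
    rw [div_le_iff₀ hm']
    nlinarith
  rw [ge_iff_le]
  linarith
end

section
/- Suppose D₀ ∈ ℝ^{m×m} is invertible, X₀ ∈ ℝ^{m×n}, Y = D₀ X₀, and the dictionary update problem has a unique solution up to diagonal scaling. Then for every i ∈ {1,…,m}, the complement Ω_i^c of the support of the i-th row of X₀ satisfies |Ω_i^c| ≥ m − 1. -/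
open Matrix

/-- under unique recovery up to diagonal scaling, every row of `X₀` has at
least `m − 1` zero entries: `|Ω_i^c| ≥ m − 1`. -/
theorem stmt5 (m n : ℕ)
    (D₀ : Matrix (Fin m) (Fin m) ℝ) (hD : IsUnit D₀)
    (X₀ Y : Matrix (Fin m) (Fin n) ℝ) (hY : Y = D₀ * X₀)
    (huniq : ∀ (D : Matrix (Fin m) (Fin m) ℝ) (X : Matrix (Fin m) (Fin n) ℝ),
      Y = D * X → (∀ (i : Fin m) (j : Fin n), X₀ i j = 0 → X i j = 0) →
      ∃ d : Fin m → ℝ, (∀ i, d i ≠ 0) ∧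
        D = D₀ * Matrix.diagonal d ∧ X = (Matrix.diagonal d)⁻¹ * X₀) :
    ∀ i : Fin m, m - 1 ≤ (Finset.univ.filter fun j : Fin n => X₀ i j = 0).card := by
  intro i
  by_contra hcard
  push_neg at hcard
  set S : Finset (Fin n) := Finset.univ.filter fun j : Fin n => X₀ i j = 0 with hS
  have hdet₀ : IsUnit D₀.det := (Matrix.isUnit_iff_isUnit_det D₀).mp hD
  have hDinv : D₀ * D₀⁻¹ = 1 := Matrix.mul_nonsing_inv D₀ hdet₀
  have hinvD : D₀⁻¹ * D₀ = 1 := Matrix.nonsing_inv_mul D₀ hdet₀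
  have hX₀ : D₀⁻¹ * Y = X₀ := by
    rw [hY, ← Matrix.mul_assoc, hinvD, Matrix.one_mul]
  -- the linear map restricting vecMul to columns in S
  set φ : (Fin m → ℝ) →ₗ[ℝ] (S → ℝ) :=
    (LinearMap.funLeft ℝ ℝ (fun j : S => (j : Fin n))).comp Y.vecMulLinear
    with hφ
  have hker : ∀ v, v ∈ LinearMap.ker φ ↔ ∀ j ∈ S, (v ᵥ* Y) j = 0 := by
    intro v
    constructor
    · intro hv j hj
      have := congrFun (LinearMap.mem_ker.mp hv) ⟨j, hj⟩
      simpa [hφ, LinearMap.funLeft] using this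
    · intro hv
      refine LinearMap.mem_ker.mpr (funext fun j => ?_)
      simpa [hφ, LinearMap.funLeft] using hv j j.2
  set u : Fin m → ℝ := D₀⁻¹ i with hu
  have huY : ∀ j, (u ᵥ* Y) j = X₀ i j := by
    intro j
    rw [← hX₀]
    simp [hu, Matrix.vecMul, Matrix.mul_apply, dotProduct]
  have huK : u ∈ LinearMap.ker φ := by
    rw [hker]
    intro j hj
    rw [huY]
    exact (Finset.mem_filter.mp hj).2
  -- finrank of the kernel is at least 2
  have hrk : 2 ≤ Module.finrank ℝ (LinearMap.ker φ) := by
    have h1 := LinearMap.finrank_range_add_finrank_ker φ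
    have h2 : Module.finrank ℝ (Fin m → ℝ) = m := by simp
    have h3 : Module.finrank ℝ (LinearMap.range φ) ≤ S.card := by
      have := Submodule.finrank_le (LinearMap.range φ)
      have h4 : Module.finrank ℝ (S → ℝ) = S.card := by simp
      omega
    have hm : S.card + 2 ≤ m := by omega
    omega
  -- pick v in the kernel not in span {u}
  have hv : ∃ v ∈ LinearMap.ker φ, v ∉ Submodule.span ℝ {u} := by
    by_contra hcon
    push_neg at hcon
    have hle : LinearMap.ker φ ≤ Submodule.span ℝ {u} := hcon
    have hmono := Submodule.finrank_mono hle
    have hspan : Module.finrank ℝ (Submodule.span ℝ ({u} : Set (Fin m → ℝ))) ≤ 1 := by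
      rcases eq_or_ne u 0 with h | h
      · rw [h, Submodule.span_zero_singleton]; simp
      · rw [finrank_span_singleton h]
    omega
  obtain ⟨v, hvK, hvspan⟩ := hv
  -- choose t
  set c : ℝ := ((D₀⁻¹).updateRow i v).det with hc
  set t : ℝ := if D₀⁻¹.det + c ≠ 0 then 1 else 2 with ht
  have ht0 : t ≠ 0 := by
    rw [ht]; split <;> norm_num
  set H : Matrix (Fin m) (Fin m) ℝ := (D₀⁻¹).updateRow i (u + t • v) with hH
  have hd0' : D₀⁻¹.det ≠ 0 := by
    have h := congrArg Matrix.det hinvD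
    rw [Matrix.det_mul, Matrix.det_one] at h
    intro h0
    rw [h0, zero_mul] at h
    simp at h
  have hdetH : H.det ≠ 0 := by
    have hdet : H.det = D₀⁻¹.det + t * c := by
      rw [hH, Matrix.det_updateRow_add, Matrix.det_updateRow_smul, hu,
        Matrix.updateRow_eq_self]
    rw [hdet, ht]
    split
    · rename_i h; simpa using h
    · rename_i h
      push_neg at h
      have hcne : c ≠ 0 := by
        intro hc0
        rw [hc0, add_zero] at h
        exact hd0' h
      intro habs
      apply hcne
      nlinarith [h, habs]
  have hdetHU : IsUnit H.det := hdetH.isUnit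
  have hHD : H * H⁻¹ = 1 := Matrix.mul_nonsing_inv H hdetHU
  -- apply uniqueness with D := H⁻¹, X := H * Y
  obtain ⟨d, hd0, hDeq, _⟩ := huniq H⁻¹ (H * Y)
    (by rw [← Matrix.mul_assoc, Matrix.nonsing_inv_mul H hdetHU, Matrix.one_mul])
    (by
      intro i' j hij
      by_cases hii : i' = i
      · subst hii
        have hrow : (H * Y) i' j = ((u + t • v) ᵥ* Y) j := by
          simp [hH, Matrix.mul_apply, Matrix.vecMul, dotProduct]
        have hj : j ∈ S := Finset.mem_filter.mpr ⟨Finset.mem_univ j, hij⟩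
        rw [hrow, Matrix.add_vecMul, Matrix.smul_vecMul, Pi.add_apply, huY, hij,
          Pi.smul_apply, (hker v).mp hvK j hj]
        simp
      · have : (H * Y) i' j = (D₀⁻¹ * Y) i' j := by
          simp [hH, Matrix.mul_apply, Matrix.updateRow_ne hii]
        rw [this, hX₀]
        exact hij)
  -- from D = D₀ * diagonal d and D = H⁻¹, derive row i relation
  have hdd : Matrix.diagonal d * Matrix.diagonal (fun k => (d k)⁻¹) = 1 := by
    rw [Matrix.diagonal_mul_diagonal]
    ext k l
    by_cases hkl : k = l
    · subst hkl
      simp [Matrix.diagonal_apply, Matrix.one_apply, mul_inv_cancel₀ (hd0 k)]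
    · simp [Matrix.diagonal_apply, Matrix.one_apply, hkl]
  have hHrow : H * D₀ = Matrix.diagonal (fun k => (d k)⁻¹) := by
    have h1 : H * (D₀ * Matrix.diagonal d) = 1 := by rw [← hDeq, hHD]
    calc H * D₀ = H * (D₀ * (Matrix.diagonal d * Matrix.diagonal (fun k => (d k)⁻¹))) := by
          rw [hdd, Matrix.mul_one]
      _ = H * (D₀ * Matrix.diagonal d) * Matrix.diagonal (fun k => (d k)⁻¹) := by
          rw [Matrix.mul_assoc, Matrix.mul_assoc]
      _ = Matrix.diagonal (fun k => (d k)⁻¹) := by rw [h1, Matrix.one_mul]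
  have hHeq : H = Matrix.diagonal (fun k => (d k)⁻¹) * D₀⁻¹ := by
    have h := congrArg (fun M => M * D₀⁻¹) hHrow
    simpa [Matrix.mul_assoc, hDinv] using h
  -- compare row i
  have hrow : ∀ k, u k + t * v k = (d i)⁻¹ * u k := by
    intro k
    have h1 : H i k = u k + t • v k := by
      rw [hH]
      simp [Matrix.updateRow_self]
    have h2 : H i k = (d i)⁻¹ * u k := by
      rw [hHeq]
      simp [hu, Matrix.mul_apply, Matrix.diagonal_apply, Finset.sum_ite_eq]
    rw [← h2, h1]
    simp [smul_eq_mul]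
  -- hence v ∈ span {u}, contradiction
  apply hvspan
  rw [Submodule.mem_span_singleton]
  refine ⟨t⁻¹ * ((d i)⁻¹ - 1), ?_⟩
  funext k
  have h3 : t * v k = ((d i)⁻¹ - 1) * u k := by linear_combination hrow k
  show (t⁻¹ * ((d i)⁻¹ - 1)) * u k = v k
  have h4 : v k = t⁻¹ * (t * v k) := by
    rw [← mul_assoc, inv_mul_cancel₀ ht0, one_mul]
  conv_rhs => rw [h4, h3]
  ring
end

section
/- Suppose D₀ ∈ ℝ^{m×m} is invertible, X₀ ∈ ℝ^{m×n}, Y = D₀ X₀, and the dictionary update problem has a unique solution up to diagonal scaling. Then for all i ∈ {1,…,m} and all i′ ≠ i, there exists j ∈ {1,…,n} such that (X₀)_{i,j} = 0 and (X₀)_{i′,j} ≠ 0. -/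
/-- under unique recovery up to diagonal scaling, for every `i` and `i′ ≠ i`
there is a column `j` with `(X₀)_{i,j} = 0` and `(X₀)_{i′,j} ≠ 0`. -/
theorem stmt6 (m n : ℕ)
    (D₀ : Matrix (Fin m) (Fin m) ℝ) (hD : IsUnit D₀)
    (X₀ Y : Matrix (Fin m) (Fin n) ℝ) (hY : Y = D₀ * X₀)
    (huniq : ∀ (D : Matrix (Fin m) (Fin m) ℝ) (X : Matrix (Fin m) (Fin n) ℝ),
      Y = D * X → (∀ (i : Fin m) (j : Fin n), X₀ i j = 0 → X i j = 0) →
      ∃ d : Fin m → ℝ, (∀ i, d i ≠ 0) ∧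
        D = D₀ * Matrix.diagonal d ∧ X = (Matrix.diagonal d)⁻¹ * X₀) :
    ∀ i i' : Fin m, i' ≠ i → ∃ j : Fin n, X₀ i j = 0 ∧ X₀ i' j ≠ 0 := by
  intro i i' hne
  by_contra hcon
  push_neg at hcon
  -- hcon : ∀ j, X₀ i j = 0 → X₀ i' j = 0
  set e : Matrix (Fin m) (Fin m) ℝ := Matrix.single i i' (1:ℝ) with he
  set X : Matrix (Fin m) (Fin n) ℝ :=
    Matrix.of fun a j => if a = i then X₀ i j + X₀ i' j else X₀ a j with hX
  have heX : ∀ a j, (e * X) a j = if a = i then X i' j else 0 := by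
    intro a j
    simp [he, Matrix.mul_apply, Matrix.single, ite_and, eq_comm]
  have hAX : (1 - e) * X = X₀ := by
    ext a j
    rw [Matrix.sub_mul, Matrix.sub_apply, Matrix.one_mul, heX]
    by_cases ha : a = i
    · subst ha
      simp [hX, hne]
    · simp [hX, ha]
  have hsupp : ∀ a j, X₀ a j = 0 → X a j = 0 := by
    intro a j hz
    by_cases ha : a = i
    · subst ha
      simp [hX, hz, hcon j hz]
    · simp [hX, ha, hz]
  obtain ⟨d, hd0, hDd, _⟩ := huniq (D₀ * (1 - e)) X
    (by rw [hY, Matrix.mul_assoc, hAX]) hsupp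
  have hcancel : (1 - e) = Matrix.diagonal d := hD.mul_left_cancel hDd
  have := congrFun (congrFun hcancel i) i'
  have hii : ¬ (i = i') := fun h => hne h.symm
  simp [he, Matrix.one_apply, Matrix.diagonal_apply, hii] at this
end

section
/- Let D ∈ ℝ^{m×m} be invertible with inverse H, let X ∈ ℝ^{m×m'} and Y = D X. Fix i, and let Ω_i be the support of row i of X. Then H_{i,:} Y_{:,Ω_i^c} = 0 and H_{i,:} Y_{:,j} ≠ 0 for every j ∈ Ω_i; moreover the row vector H_{i,:} (up to nonzero scalar multiples) is the unique solution of h Y_{:,Ω_i^c} = 0 if and only if span(Y_{:,Ω_i^c}) has dimension m − 1, in which case span(Y_{:,Ω_i^c}) = span(D_{:,{i}^c}) (the span of all columns of D except the i-th). -/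
open Module Submodule

local notation "⟪" x ", " y "⟫" => @inner ℝ _ _ x y

lemma mem_orth_span {E : Type*} [NormedAddCommGroup E] [InnerProductSpace ℝ E]
    (s : Set E) (x : E) :
    x ∈ (Submodule.span ℝ s)ᗮ ↔ ∀ v ∈ s, ⟪v, x⟫ = 0 := by
  rw [Submodule.mem_orthogonal]
  constructor
  · intro h v hv; exact h v (Submodule.subset_span hv)
  · intro h u hu
    induction hu using Submodule.span_induction with
    | mem v hv => exact h v hv
    | zero => simp
    | add a b _ _ ha hb => simp [inner_add_left, ha, hb]
    | smul c a _ ha => simp [inner_smul_left, ha]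

/-- `H_{i,:} Y_{:,Ω_i^c} = 0`, `H_{i,:} Y_{:,j} ≠ 0` for `j ∈ Ω_i`; moreover
`H_{i,:}` is (up to scalar) the unique solution of `h Y_{:,Ω_i^c} = 0` iff
`span(Y_{:,Ω_i^c})` has dimension `m − 1`, in which case it equals `span(D_{:,{i}^c})`. -/
theorem stmt7 (m m' : ℕ)
    (D : Matrix (Fin m) (Fin m) ℝ) (hD : IsUnit D)
    (H : Matrix (Fin m) (Fin m) ℝ) (hH : H = D⁻¹)
    (X Y : Matrix (Fin m) (Fin m') ℝ) (hY : Y = D * X)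
    (i : Fin m) :
    (∀ j : Fin m', X i j = 0 → dotProduct (H i) (fun r => Y r j) = 0) ∧
    (∀ j : Fin m', X i j ≠ 0 → dotProduct (H i) (fun r => Y r j) ≠ 0) ∧
    ((∀ h : Fin m → ℝ,
        (∀ j : Fin m', X i j = 0 → dotProduct h (fun r => Y r j) = 0) → ∃ c : ℝ, h = c • H i) ↔
      Module.finrank ℝ
        (Submodule.span ℝ {v : Fin m → ℝ | ∃ j : Fin m', X i j = 0 ∧ v = fun r => Y r j})
        = m - 1) ∧
    (Module.finrank ℝ
        (Submodule.span ℝ {v : Fin m → ℝ | ∃ j : Fin m', X i j = 0 ∧ v = fun r => Y r j})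
        = m - 1 →
      Submodule.span ℝ {v : Fin m → ℝ | ∃ j : Fin m', X i j = 0 ∧ v = fun r => Y r j} =
      Submodule.span ℝ {v : Fin m → ℝ | ∃ k : Fin m, k ≠ i ∧ v = fun r => D r k}) := by
  have hm : 0 < m := i.pos
  have hHD : H * D = 1 := by rw [hH]; exact Matrix.nonsing_inv_mul D ((Matrix.isUnit_iff_isUnit_det D).mp hD)
  -- key: H i ⬝ Y col j = X i j
  have key : ∀ j : Fin m', dotProduct (H i) (fun r => Y r j) = X i j := by
    intro j
    have h1 : H * Y = X := by
      rw [hY, ← Matrix.mul_assoc, hHD, Matrix.one_mul]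
    calc dotProduct (H i) (fun r => Y r j) = (H * Y) i j := (Matrix.mul_apply).symm
      _ = X i j := by rw [h1]
  set S : Set (Fin m → ℝ) := {v : Fin m → ℝ | ∃ j : Fin m', X i j = 0 ∧ v = fun r => Y r j} with hS
  set T : Set (Fin m → ℝ) := {v : Fin m → ℝ | ∃ k : Fin m, k ≠ i ∧ v = fun r => D r k} with hT
  -- T is the range of the restricted columns
  have hTrange : T = Set.range (fun k : {k : Fin m // k ≠ i} => fun r => D r k.1) := by
    ext v; constructor
    · rintro ⟨k, hk, rfl⟩; exact ⟨⟨k, hk⟩, rfl⟩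
    · rintro ⟨⟨k, hk⟩, rfl⟩; exact ⟨k, hk, rfl⟩
  have hcols : LinearIndependent ℝ (fun k : Fin m => fun r => D r k) := by
    have := Matrix.linearIndependent_cols_iff_isUnit.mpr hD
    exact this
  have hcols' : LinearIndependent ℝ (fun k : {k : Fin m // k ≠ i} => fun r => D r k.1) :=
    hcols.comp Subtype.val Subtype.val_injective
  have hcard : Fintype.card {k : Fin m // k ≠ i} = m - 1 := by
    simp [Fintype.card_subtype_compl, Fintype.card_fin]
  have hfinT : Module.finrank ℝ (Submodule.span ℝ T) = m - 1 := by
    rw [hTrange, finrank_span_eq_card hcols', hcard]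
  -- S ⊆ span T
  have hST : Submodule.span ℝ S ≤ Submodule.span ℝ T := by
    rw [Submodule.span_le]
    rintro v ⟨j, hj, rfl⟩
    have hv : (fun r => Y r j) = ∑ k : Fin m, X k j • (fun r => D r k) := by
      funext r
      simp only [hY, Matrix.mul_apply, Finset.sum_apply, Pi.smul_apply, smul_eq_mul]
      exact Finset.sum_congr rfl (fun k _ => mul_comm _ _)
    rw [hv]
    apply Submodule.sum_mem
    intro k _
    by_cases hk : k = i
    · subst hk; rw [hj]; simp
    · exact Submodule.smul_mem _ _ (Submodule.subset_span ⟨k, hk, rfl⟩)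
  -- move to Euclidean space
  set e : (Fin m → ℝ) ≃ₗ[ℝ] EuclideanSpace ℝ (Fin m) := (WithLp.linearEquiv 2 ℝ (Fin m → ℝ)).symm with he
  have hinner : ∀ a b : Fin m → ℝ, ⟪e a, e b⟫ = dotProduct a b := by
    intro a b
    simp [he, PiLp.inner_apply, RCLike.inner_apply, dotProduct, WithLp.linearEquiv, mul_comm]
  set W : Submodule ℝ (EuclideanSpace ℝ (Fin m)) := Submodule.span ℝ (e '' S) with hW
  have hWmap : W = (Submodule.span ℝ S).map (e : (Fin m → ℝ) →ₗ[ℝ] _) := by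
    rw [hW, Submodule.map_span, LinearEquiv.coe_coe]
  have hfinW : Module.finrank ℝ W = Module.finrank ℝ (Submodule.span ℝ S) := by
    rw [hWmap]; exact LinearEquiv.finrank_map_eq e _
  set u : EuclideanSpace ℝ (Fin m) := e (H i) with hu
  have huW : u ∈ Wᗮ := by
    rw [hW, mem_orth_span]
    rintro v ⟨w, ⟨j, hj, rfl⟩, rfl⟩
    rw [real_inner_comm, hinner, key j, hj]
  have hune : u ≠ 0 := by
    intro h0
    have h1 : dotProduct (H i) (fun r => D r i) = (1 : ℝ) := by
      calc dotProduct (H i) (fun r => D r i) = (H * D) i i := (Matrix.mul_apply).symm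
        _ = 1 := by rw [hHD]; simp
    have h2 : ⟪u, e (fun r => D r i)⟫ = (1:ℝ) := by rw [hu, hinner]; exact h1
    rw [h0] at h2; simp at h2
  -- membership bridge
  have hbridge : ∀ h : Fin m → ℝ,
      (∀ j : Fin m', X i j = 0 → dotProduct h (fun r => Y r j) = 0) ↔ e h ∈ Wᗮ := by
    intro h
    rw [hW, mem_orth_span]
    constructor
    · rintro hyp v ⟨w, ⟨j, hj, rfl⟩, rfl⟩
      rw [real_inner_comm, hinner]
      exact hyp j hj
    · intro hyp j hj
      have := hyp (e (fun r => Y r j)) ⟨_, ⟨j, hj, rfl⟩, rfl⟩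
      rwa [real_inner_comm, hinner] at this
  have hspan_u : ∀ h : Fin m → ℝ, (∃ c : ℝ, h = c • H i) ↔ e h ∈ Submodule.span ℝ {u} := by
    intro h
    rw [Submodule.mem_span_singleton]
    constructor
    · rintro ⟨c, rfl⟩; exact ⟨c, by rw [hu, map_smul]⟩
    · rintro ⟨c, hc⟩
      refine ⟨c, ?_⟩
      apply e.injective
      rw [← hc, hu, map_smul]
  -- condition ↔ Wᗮ = span {u}
  have hcond : (∀ h : Fin m → ℝ,
      (∀ j : Fin m', X i j = 0 → dotProduct h (fun r => Y r j) = 0) → ∃ c : ℝ, h = c • H i)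
      ↔ Wᗮ = Submodule.span ℝ {u} := by
    constructor
    · intro hyp
      apply le_antisymm
      · intro x hx
        obtain ⟨h, rfl⟩ := e.surjective x
        exact (hspan_u h).mp (hyp h ((hbridge h).mpr hx))
      · rw [Submodule.span_le, Set.singleton_subset_iff]; exact huW
    · intro heq h hh
      apply (hspan_u h).mpr
      rw [← heq]
      exact (hbridge h).mp hh
  have hdim : Module.finrank ℝ W + Module.finrank ℝ Wᗮ = m := by
    have := Submodule.finrank_add_finrank_orthogonal W
    simpa [finrank_euclideanSpace, Fintype.card_fin] using this
  have horth : Wᗮ = Submodule.span ℝ {u} ↔ Module.finrank ℝ (Submodule.span ℝ S) = m - 1 := by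
    rw [← hfinW]
    constructor
    · intro heq
      rw [heq, finrank_span_singleton hune] at hdim
      omega
    · intro hfr
      have h1 : Module.finrank ℝ Wᗮ = 1 := by omega
      have h2 : Submodule.span ℝ {u} ≤ Wᗮ := by
        rw [Submodule.span_le, Set.singleton_subset_iff]; exact huW
      exact (Submodule.eq_of_le_of_finrank_le h2 (by rw [finrank_span_singleton hune, h1])).symm
  refine ⟨fun j hj => by rw [key j, hj], fun j hj => by rw [key j]; exact hj, ?_, ?_⟩
  · rw [hcond]; exact horth
  · intro hfr
    exact Submodule.eq_of_le_of_finrank_le hST (by rw [hfinT, hfr])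
end
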